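/- If there exists an [n,k,d] code over F_5 with k ≥ 2, then there exists an [n-d, k-1, d'] code over F_5 with d' ≥ d/5 (i.e., 5·d' ≥ d). -/

import Mathlib

/-
Let `c ∈ C` have minimum weight `d` and puncture `C` on the support of `c`. For `x ∈ C`,
pigeonhole over the `q = |K|` possible ratios `x i / c i` on the support yields `l` with
`x i = l * c i` on at least `d / q` of its positions. If `x - l • c ≠ 0` it has weight at least
`d`, of which at most `d - d / q` lies on the support, so `x` has at least `d / q` nonzero entries
off it. Hence the punctured code has minimum distance at least `d / q`, and the puncturing map
kills exactly the multiples of `c`, so the dimension drops by one.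
-/

/-- `C` has minimum nonzero Hamming weight `d`. -/
def IsMinWt {n : ℕ} (C : Submodule (ZMod 5) (Fin n → ZMod 5)) (d : ℕ) : Prop :=
  (∃ x ∈ C, x ≠ 0 ∧ hammingNorm x = d) ∧ ∀ x ∈ C, x ≠ 0 → d ≤ hammingNorm x

open Finset Module

section Residual

variable {K ι κ : Type*} [Field K] [DecidableEq K]

theorem hammingNorm_comp_embedding [Fintype κ] (f : κ ↪ ι) (x : ι → K) :
    hammingNorm (x ∘ f) = #{i ∈ univ.map f | x i ≠ 0} := by
  rw [filter_map, card_map]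
  rfl

variable [Fintype ι]

theorem hammingNorm_eq_card_on_support_add_card_off_support (c x : ι → K) :
    hammingNorm x = #{i | c i ≠ 0 ∧ x i ≠ 0} + #{i | c i = 0 ∧ x i ≠ 0} := by
  rw [hammingNorm, ← card_filter_add_card_filter_not (s := {i | x i ≠ 0}) (fun i => c i ≠ 0)]
  simp only [filter_filter, not_not]
  congr 2 <;> ext i <;> simp [and_comm]

theorem exists_le_card_mul_card_eq_smul_on_support [Fintype K] (c x : ι → K) :
    ∃ l : K, hammingNorm c ≤ Fintype.card K * #{i | c i ≠ 0 ∧ x i = l * c i} := by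
  have hK : (Fintype.card K : ℚ) ≠ 0 := by exact_mod_cast Fintype.card_ne_zero
  obtain ⟨l, -, hl⟩ := exists_le_card_fiber_of_nsmul_le_card_of_maps_to
    (s := {i | c i ≠ 0}) (t := univ) (f := fun i => x i / c i)
    (b := (hammingNorm c / Fintype.card K : ℚ))
    (fun _ _ => mem_univ _) univ_nonempty (by simp [hammingNorm, mul_div_cancel₀ _ hK])
  have hl' : hammingNorm c ≤ Fintype.card K * #{i | c i ≠ 0 ∧ x i / c i = l} := by
    rw [div_le_iff₀' (by exact_mod_cast Fintype.card_pos), filter_filter] at hl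
    exact_mod_cast hl
  refine ⟨l, hl'.trans (Nat.mul_le_mul_left _ (card_le_card fun i => ?_))⟩
  simp only [mem_filter, mem_univ, true_and]
  rintro ⟨hci, rfl⟩
  exact ⟨hci, (div_mul_cancel₀ _ hci).symm⟩

theorem hammingNorm_le_card_mul_card_off_support [Fintype K] {C : Submodule K (ι → K)}
    {c x : ι → K} (hc : c ∈ C) (hmin : ∀ y ∈ C, y ≠ 0 → hammingNorm c ≤ hammingNorm y)
    (hx : x ∈ C) (hxc : x ∉ K ∙ c) :
    hammingNorm c ≤ Fintype.card K * #{i | c i = 0 ∧ x i ≠ 0} := by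
  obtain ⟨l, hl⟩ := exists_le_card_mul_card_eq_smul_on_support c x
  set z := x - l • c
  have hz : z ≠ 0 := fun h =>
    hxc (Submodule.mem_span_singleton.mpr ⟨l, (sub_eq_zero.mp h).symm⟩)
  have hz_apply (i : ι) : z i = x i - l * c i := rfl
  have hoff : #{i | c i = 0 ∧ z i ≠ 0} = #{i | c i = 0 ∧ x i ≠ 0} := by
    congr 1; ext i; simp +contextual [hz_apply]
  have hon : #{i | c i ≠ 0 ∧ z i ≠ 0} + #{i | c i ≠ 0 ∧ x i = l * c i} = hammingNorm c := by
    rw [hammingNorm, ← card_filter_add_card_filter_not (s := {i | c i ≠ 0}) (fun i => z i ≠ 0)]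
    simp only [filter_filter, not_not, hz_apply, sub_eq_zero]
  have hsplit := hammingNorm_eq_card_on_support_add_card_off_support c z
  have hz_wt := hmin z (C.sub_mem hx (C.smul_mem l hc)) hz
  calc hammingNorm c ≤ Fintype.card K * #{i | c i ≠ 0 ∧ x i = l * c i} := hl
    _ ≤ Fintype.card K * #{i | c i = 0 ∧ x i ≠ 0} := Nat.mul_le_mul_left _ (by omega)

variable [Fintype κ] {f : κ ↪ ι} {c : ι → K}

theorem hammingNorm_funLeft_of_map_univ (hf : univ.map f = univ.filter (c · = 0)) (x : ι → K) :
    hammingNorm (LinearMap.funLeft K K f x) = #{i | c i = 0 ∧ x i ≠ 0} := by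
  rw [← filter_filter, ← hf]
  exact hammingNorm_comp_embedding f x

theorem funLeft_eq_zero_of_map_univ (hf : univ.map f = univ.filter (c · = 0)) :
    LinearMap.funLeft K K f c = 0 := by
  ext j
  have : f j ∈ univ.map f := mem_map_of_mem f (mem_univ j)
  simpa [hf] using this

variable [Fintype K] {C : Submodule K (ι → K)}

theorem le_card_mul_hammingNorm_of_mem_map_funLeft (hc : c ∈ C)
    (hmin : ∀ y ∈ C, y ≠ 0 → hammingNorm c ≤ hammingNorm y)
    (hf : univ.map f = univ.filter (c · = 0)) {y : κ → K}
    (hy : y ∈ C.map (LinearMap.funLeft K K f)) (hy0 : y ≠ 0) :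
    hammingNorm c ≤ Fintype.card K * hammingNorm y := by
  obtain ⟨x, hx, rfl⟩ := Submodule.mem_map.mp hy
  rw [hammingNorm_funLeft_of_map_univ hf]
  refine hammingNorm_le_card_mul_card_off_support hc hmin hx fun hxc => hy0 ?_
  obtain ⟨l, rfl⟩ := Submodule.mem_span_singleton.mp hxc
  rw [map_smul, funLeft_eq_zero_of_map_univ hf, smul_zero]

theorem ker_funLeft_comp_subtype_eq_span (hc : c ∈ C) (hc0 : c ≠ 0)
    (hmin : ∀ y ∈ C, y ≠ 0 → hammingNorm c ≤ hammingNorm y)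
    (hf : univ.map f = univ.filter (c · = 0)) :
    LinearMap.ker (LinearMap.funLeft K K f ∘ₗ C.subtype) = K ∙ ⟨c, hc⟩ := by
  ext ⟨x, hx⟩
  simp only [LinearMap.mem_ker, LinearMap.coe_comp, Function.comp_apply, Submodule.coe_subtype]
  constructor
  · intro hx0
    by_contra hxc
    have key := hammingNorm_le_card_mul_card_off_support hc hmin hx fun h => hxc <| by
      obtain ⟨l, hl⟩ := Submodule.mem_span_singleton.mp h
      exact Submodule.mem_span_singleton.mpr ⟨l, Subtype.ext hl⟩
    rw [← hammingNorm_funLeft_of_map_univ hf, hx0, hammingNorm_zero, mul_zero,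
      Nat.le_zero, hammingNorm_eq_zero] at key
    exact hc0 key
  · intro hxc
    obtain ⟨l, hl⟩ := Submodule.mem_span_singleton.mp hxc
    have hxl : x = l • c := (congrArg Subtype.val hl).symm
    rw [hxl, map_smul, funLeft_eq_zero_of_map_univ hf, smul_zero]

theorem finrank_map_funLeft_add_one (hc : c ∈ C) (hc0 : c ≠ 0)
    (hmin : ∀ y ∈ C, y ≠ 0 → hammingNorm c ≤ hammingNorm y)
    (hf : univ.map f = univ.filter (c · = 0)) :
    finrank K (C.map (LinearMap.funLeft K K f)) + 1 = finrank K C := by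
  have hc0' : (⟨c, hc⟩ : C) ≠ 0 := fun h => hc0 (congrArg Subtype.val h)
  rw [← LinearMap.finrank_range_add_finrank_ker (LinearMap.funLeft K K f ∘ₗ C.subtype),
    LinearMap.range_comp, Submodule.range_subtype,
    ker_funLeft_comp_subtype_eq_span hc hc0 hmin hf, finrank_span_singleton hc0']

end Residual

theorem IsMinWt.exists_of_ne_bot {m : ℕ} {D : Submodule (ZMod 5) (Fin m → ZMod 5)} (hD : D ≠ ⊥) :
    ∃ d, IsMinWt D d := by
  classical
  have hne : ∃ w, ∃ y ∈ D, y ≠ 0 ∧ hammingNorm y = w := by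
    obtain ⟨y, hy, hy0⟩ := Submodule.exists_mem_ne_zero_of_ne_bot hD
    exact ⟨_, y, hy, hy0, rfl⟩
  exact ⟨Nat.find hne, Nat.find_spec hne, fun y hy hy0 => Nat.find_min' hne ⟨y, hy, hy0, rfl⟩⟩

/-- Residual code: an `[n,k,d]₅` code with `k ≥ 2` yields an `[n-d,k-1,d']₅`
code with `5·d' ≥ d`. -/
theorem stmt_4 {n k d : ℕ} (hk2 : 2 ≤ k)
    (h : ∃ C : Submodule (ZMod 5) (Fin n → ZMod 5),
      Module.finrank (ZMod 5) C = k ∧ IsMinWt C d) :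
    ∃ D : Submodule (ZMod 5) (Fin (n - d) → ZMod 5),
      Module.finrank (ZMod 5) D = k - 1 ∧ ∃ d', IsMinWt D d' ∧ d ≤ 5 * d' := by
  have : Fact (Nat.Prime 5) := ⟨by norm_num⟩
  obtain ⟨C, rfl, ⟨c, hc, hc0, rfl⟩, hmin⟩ := h
  set s : Finset (Fin n) := univ.filter (c · = 0)
  have hs : #s = n - hammingNorm c := by
    have hs_compl : s = univ \ univ.filter (c · ≠ 0) := by ext; simp [s]
    rw [hs_compl, card_univ_sdiff, Fintype.card_fin]
    rfl
  set f := (s.orderEmbOfFin hs).toEmbedding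
  have hf : univ.map f = s := map_orderEmbOfFin_univ s hs
  have hrank := finrank_map_funLeft_add_one hc hc0 hmin hf
  obtain ⟨d', hd'⟩ := IsMinWt.exists_of_ne_bot (D := C.map (LinearMap.funLeft _ _ f)) fun hbot => by
    rw [hbot, finrank_bot] at hrank
    omega
  obtain ⟨y, hy, hy0, rfl⟩ := hd'.1
  refine ⟨_, by omega, _, hd', ?_⟩
  simpa [ZMod.card] using le_card_mul_hammingNorm_of_mem_map_funLeft hc hmin hf hy hy0
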